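/- Let M be an MSC over P and Σ, let q ∈ P, e ∈ E_q, and p ∈ P. Then last_p(e) = max{ last_π(e) : π ∈ Π^gossip_{p,q} }, where the maximum of a set of elements of E ∪ {⊥} is taken in the extended order (and equals ⊥ if all elements are ⊥). -/

import Mathlib

namespace Gossip

/-- Events extended with bottom and top elements. -/
inductive ExtEv (E : Type) : Type where
  | bot : ExtEv E
  | evt (e : E) : ExtEv E
  | top : ExtEv E

/-- A message sequence chart (MSC) over processes `P`, alphabet `A`,
with (finite, nonempty) set of events `E`. -/
structure MSC (P A E : Type) : Type where
  fintypeE : Fintype E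
  nonemptyE : Nonempty E
  loc : E → P
  lab : E → A
  /-- process successor relation `→` -/
  next : E → E → Prop
  /-- message relation `◁` -/
  msg : E → E → Prop
  next_loc : ∀ {e f : E}, next e f → loc e = loc f
  next_irrefl : ∀ e : E, ¬ next e e
  next_right_unique : ∀ {e f f' : E}, next e f → next e f' → f = f'
  next_left_unique : ∀ {e e' f : E}, next e f → next e' f → e = e'
  next_total : ∀ e f : E, loc e = loc f →
      Relation.ReflTransGen next e f ∨ Relation.ReflTransGen next f e
  msg_loc : ∀ {e f : E}, msg e f → loc e ≠ loc f
  /-- every event belongs to at most one pair of `◁` -/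
  msg_unique : ∀ {e f e' f' : E}, msg e f → msg e' f' →
      (e = e' ∨ e = f' ∨ f = e' ∨ f = f') → e = e' ∧ f = f'
  fifo : ∀ {e f e' f' : E}, msg e f → msg e' f' → loc e = loc e' → loc f = loc f' →
      (Relation.ReflTransGen next e e' ↔ Relation.ReflTransGen next f f')
  /-- `≤ = (→ ∪ ◁)*` is a partial order -/
  causal_antisymm : ∀ {e f : E},
      Relation.ReflTransGen (fun x y => next x y ∨ msg x y) e f →
      Relation.ReflTransGen (fun x y => next x y ∨ msg x y) f e → e = f

namespace MSC

variable {P A E B : Type}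

/-- the causal order `≤ = (→ ∪ ◁)*` -/
def le (M : MSC P A E) : E → E → Prop :=
  Relation.ReflTransGen (fun x y => M.next x y ∨ M.msg x y)

/-- the strict causal order `<` -/
def lt (M : MSC P A E) (e f : E) : Prop := M.le e f ∧ e ≠ f

/-- `→*` -/
def nextStar (M : MSC P A E) : E → E → Prop := Relation.ReflTransGen M.next

/-- the causal order extended to `E ∪ {⊥,⊤}` with `⊥ < e < ⊤` -/
def extLe (M : MSC P A E) : ExtEv E → ExtEv E → Prop
  | .bot, _ => True
  | _, .top => True
  | .evt e, .evt f => M.le e f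
  | _, _ => False

def extLt (M : MSC P A E) (x y : ExtEv E) : Prop := M.extLe x y ∧ x ≠ y

/-- replace the labelling of an MSC (e.g. to pair it with an extra labelling) -/
def relabel (M : MSC P A E) (μ : E → B) : MSC P B E where
  fintypeE := M.fintypeE
  nonemptyE := M.nonemptyE
  loc := M.loc
  lab := μ
  next := M.next
  msg := M.msg
  next_loc := M.next_loc
  next_irrefl := M.next_irrefl
  next_right_unique := M.next_right_unique
  next_left_unique := M.next_left_unique
  next_total := M.next_total
  msg_loc := M.msg_loc
  msg_unique := M.msg_unique
  fifo := M.fifo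
  causal_antisymm := M.causal_antisymm

end MSC

/-- letters of path expressions: `→`, `→*`, `p▷q`, `⟨a⟩` -/
inductive PathLetter (P A : Type) : Type where
  | next : PathLetter P A
  | nextStar : PathLetter P A
  | msg (p q : P) : PathLetter P A
  | lab (a : A) : PathLetter P A

/-- path expressions: finite words over `Γ` -/
abbrev PathExpr (P A : Type) := List (PathLetter P A)

variable {P A E : Type}

def letterSem (M : MSC P A E) : PathLetter P A → E → E → Prop
  | .next => M.next
  | .nextStar => M.nextStar
  | .msg p q => fun e f => M.loc e = p ∧ M.loc f = q ∧ M.msg e f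
  | .lab a => fun e f => e = f ∧ M.lab e = a

/-- `⟦π⟧` -/
def pathSem (M : MSC P A E) : PathExpr P A → E → E → Prop
  | [] => fun e f => e = f
  | l :: π => fun e g => ∃ f, letterSem M l e f ∧ pathSem M π f g

def letterComp : PathLetter P A → P → P → Prop
  | .msg p q => fun x y => x = p ∧ y = q
  | _ => fun x y => x = y

/-- `Comp(π)`; `π ∈ Π_{p,q}` iff `pcomp π p q` -/
def pcomp : PathExpr P A → P → P → Prop
  | [] => fun x y => x = y
  | l :: π => fun x z => ∃ y, letterComp l x y ∧ pcomp π y z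

/-- `IsLast M π e x` holds iff `x = last_π(e)` (with `x = ⊥` iff no `π`-path into `e`). -/
def IsLast (M : MSC P A E) (π : PathExpr P A) (e : E) : ExtEv E → Prop
  | .bot => ∀ f, ¬ pathSem M π f e
  | .evt g => pathSem M π g e ∧ ∀ f, pathSem M π f e → M.le f g
  | .top => False

/-- `IsFirst M π e x` holds iff `x = first_π(e)` (with `x = ⊤` iff no `π`-path out of `e`). -/
def IsFirst (M : MSC P A E) (π : PathExpr P A) (e : E) : ExtEv E → Prop
  | .top => ∀ f, ¬ pathSem M π e f
  | .evt g => pathSem M π e g ∧ ∀ f, pathSem M π e f → M.le g f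
  | .bot => False

/-- `IsFa M π π' e x` holds iff `x = f_{π,π'}(e) = first_{π'}(last_π(e))`, with
`first_{π'}(⊥) := ⊥`. -/
def IsFa (M : MSC P A E) (π π' : PathExpr P A) (e : E) (x : ExtEv E) : Prop :=
  (IsLast M π e ExtEv.bot ∧ x = ExtEv.bot) ∨
    ∃ g, IsLast M π e (ExtEv.evt g) ∧ IsFirst M π' g x

/-- `IsLastProc M p e x` holds iff `x = last_p(e)`, the maximal event of process `p`
strictly below `e` (`⊥` if none). -/
def IsLastProc (M : MSC P A E) (p : P) (e : E) : ExtEv E → Prop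
  | .bot => ∀ f, M.loc f = p → ¬ M.lt f e
  | .evt g => M.loc g = p ∧ M.lt g e ∧ ∀ f, M.loc f = p → M.lt f e → M.le f g
  | .top => False

/-- `π ≼_e π'`, i.e. `last_π(e) ≤ last_{π'}(e)` -/
def ple (M : MSC P A E) (π π' : PathExpr P A) (e : E) : Prop :=
  ∃ x y, IsLast M π e x ∧ IsLast M π' e y ∧ M.extLe x y

def gossipSuffix : P → List P → PathExpr P A
  | _, [] => []
  | p, q :: w => PathLetter.msg p q :: PathLetter.nextStar :: gossipSuffix q w

/-- `π_w` for `w = p :: rest` -/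
def gossipExpr (p : P) (w : List P) : PathExpr P A :=
  match w with
  | [] => [PathLetter.next, PathLetter.nextStar]
  | _ :: _ => PathLetter.nextStar :: gossipSuffix p w

/-- `π ∈ Π^gossip` -/
def IsGossip (π : PathExpr P A) : Prop :=
  ∃ (p : P) (w : List P), (p :: w).Nodup ∧ π = gossipExpr p w

/-- actions of a CFM transition -/
inductive CAct (P A Msg : Type) : Type where
  | internal (a : A) : CAct P A Msg
  | send (a : A) (m : Msg) (q : P) : CAct P A Msg
  | recv (a : A) (m : Msg) (q : P) : CAct P A Msg

def CAct.labelOf {P A Msg : Type} : CAct P A Msg → A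
  | .internal a => a
  | .send a _ _ => a
  | .recv a _ _ => a

/-- a communicating finite-state machine over `P` and `A` -/
structure CFM (P A : Type) : Type 1 where
  Msg : Type
  msgFin : Fintype Msg
  S : Type
  sFin : Fintype S
  ι : P → S
  Δ : P → Set (S × CAct P A Msg × S)
  Acc : Set (P → S)
  wf_send : ∀ p s a m q s', (s, CAct.send a m q, s') ∈ Δ p → q ≠ p
  wf_recv : ∀ p s a m q s', (s, CAct.recv a m q, s') ∈ Δ p → q ≠ p

namespace CFM

variable {P A E : Type}

/-- `ρ` is a run of the CFM `C` on the MSC `M` -/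
def IsRun (C : CFM P A) (M : MSC P A E) (ρ : E → C.S × CAct P A C.Msg × C.S) : Prop :=
  (∀ e, ρ e ∈ C.Δ (M.loc e)) ∧
  (∀ e, ((ρ e).2.1).labelOf = M.lab e) ∧
  (∀ e, (¬ ∃ f, M.next f e) → (ρ e).1 = C.ι (M.loc e)) ∧
  (∀ e f, M.next e f → (ρ e).2.2 = (ρ f).1) ∧
  (∀ e, (¬ ∃ f, M.msg e f) → (¬ ∃ f, M.msg f e) → ∃ a, (ρ e).2.1 = CAct.internal a) ∧
  (∀ e f, M.msg e f → ∃ m, (ρ e).2.1 = CAct.send (M.lab e) m (M.loc f) ∧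
      (ρ f).2.1 = CAct.recv (M.lab f) m (M.loc e))

/-- the run `ρ` is accepting -/
def IsAccepting (C : CFM P A) (M : MSC P A E)
    (ρ : E → C.S × CAct P A C.Msg × C.S) : Prop :=
  ∃ s : P → C.S, s ∈ C.Acc ∧ ∀ p,
    ((∃ e, M.loc e = p) → ∃ e, M.loc e = p ∧ (¬ ∃ f, M.next e f) ∧ s p = (ρ e).2.2) ∧
    ((¬ ∃ e, M.loc e = p) → s p = C.ι p)

/-- `M ∈ L(C)` -/
def Accepts (C : CFM P A) (M : MSC P A E) : Prop :=
  ∃ ρ, C.IsRun M ρ ∧ C.IsAccepting M ρ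

/-- deterministic CFMs -/
def Deterministic (C : CFM P A) : Prop :=
  ∀ p s γ₁ s₁ γ₂ s₂, (s, γ₁, s₁) ∈ C.Δ p → (s, γ₂, s₂) ∈ C.Δ p →
    CAct.labelOf γ₁ = CAct.labelOf γ₂ →
    ((∀ a₁ a₂, γ₁ = CAct.internal a₁ → γ₂ = CAct.internal a₂ → s₁ = s₂) ∧
     (∀ a₁ m₁ a₂ m₂ q, γ₁ = CAct.send a₁ m₁ q → γ₂ = CAct.send a₂ m₂ q →
        s₁ = s₂ ∧ m₁ = m₂) ∧
     (∀ a₁ a₂ m q, γ₁ = CAct.recv a₁ m q → γ₂ = CAct.recv a₂ m q → s₁ = s₂))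

end CFM

/-- acceptance of the extended MSC `(M, ξ)` by a CFM over a product alphabet -/
def AcceptsExt {P A E Ξ : Type} (C : CFM P (A × Ξ)) (M : MSC P A E) (ξ : E → Ξ) : Prop :=
  C.Accepts (M.relabel fun e => (M.lab e, ξ e))

/-- apply `μ` to an extended event, sending both `⊥` and `⊤` to `none` -/
def extToOptMap {E Θ : Type} (μ : E → Θ) : ExtEv E → Option Θ
  | .evt g => some (μ g)
  | _ => none

/-- apply `μ` to an extended event, preserving `⊥` and `⊤` -/
def extMap {E Θ : Type} (μ : E → Θ) : ExtEv E → ExtEv Θ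
  | .bot => ExtEv.bot
  | .evt g => ExtEv.evt (μ g)
  | .top => ExtEv.top

/-- formulas of the temporal logic TL -/
inductive TL (P A : Type) : Type where
  | lab (a : A) : TL P A
  | proc (p : P) : TL P A
  | disj (φ ψ : TL P A) : TL P A
  | neg (φ : TL P A) : TL P A
  | co (φ : TL P A) : TL P A
  | tuntil (φ ψ : TL P A) : TL P A
  | tsince (φ ψ : TL P A) : TL P A

/-- `M, e ⊨ φ` -/
def TLsat (M : MSC P A E) : TL P A → E → Prop
  | .lab a, e => M.lab e = a
  | .proc p, e => M.loc e = p
  | .disj φ ψ, e => TLsat M φ e ∨ TLsat M ψ e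
  | .neg φ, e => ¬ TLsat M φ e
  | .co φ, e => ∃ f, ¬ M.le e f ∧ ¬ M.le f e ∧ TLsat M φ f
  | .tuntil φ ψ, e => ∃ f, M.lt e f ∧ TLsat M ψ f ∧ ∀ g, M.lt e g → M.lt g f → TLsat M φ g
  | .tsince φ ψ, e => ∃ f, M.lt f e ∧ TLsat M ψ f ∧ ∀ g, M.lt f g → M.lt g e → TLsat M φ g

end Gossip

namespace Gossip

variable {P A E : Type}

namespace MSC

variable (M : MSC P A E)

lemma le_of_nextStar {f g : E} (h : M.nextStar f g) : M.le f g :=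
  Relation.ReflTransGen.mono (fun _ _ => Or.inl) _ _ h

lemma loc_eq_of_nextStar {f g : E} (h : M.nextStar f g) : M.loc f = M.loc g := by
  induction h with
  | refl => rfl
  | tail _ hn ih => exact ih.trans (M.next_loc hn)

lemma lt_of_step_of_le {f g e : E} (hs : M.next f g ∨ M.msg f g) (hle : M.le g e) :
    M.lt f e := by
  refine ⟨.head hs hle, ?_⟩
  rintro rfl
  obtain rfl : g = f := M.causal_antisymm hle (.single hs)
  rcases hs with hn | hm
  · exact M.next_irrefl _ hn
  · exact M.msg_loc hm rfl

lemma lt_of_le_of_lt {f g e : E} (h₁ : M.le f g) (h₂ : M.lt g e) : M.lt f e := by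
  refine ⟨h₁.trans h₂.1, ?_⟩
  rintro rfl
  exact h₂.2 (M.causal_antisymm h₂.1 h₁)

lemma le_of_msg_of_le {f g e : E} (hm : M.msg f g) (hle : M.le g e) : M.le f e :=
  .head (Or.inr hm) hle

lemma nextStar_of_le {f g : E} (hloc : M.loc f = M.loc g) (h : M.le f g) :
    M.nextStar f g := by
  rcases M.next_total f g hloc with hfg | hgf
  · exact hfg
  · obtain rfl := M.causal_antisymm (M.le_of_nextStar hgf) h
    exact .refl

end MSC

variable (M : MSC P A E)

lemma le_of_pathSem {π : PathExpr P A} {f g : E} (h : pathSem M π f g) : M.le f g := by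
  induction π generalizing f with
  | nil => exact (show f = g from h) ▸ .refl
  | cons l π ih =>
    obtain ⟨f', hl, hπ⟩ := h
    refine .trans ?_ (ih hπ)
    cases l with
    | next => exact .single (Or.inl hl)
    | nextStar => exact M.le_of_nextStar hl
    | msg => exact .single (Or.inr hl.2.2)
    | lab => exact hl.1 ▸ .refl

lemma pcomp_of_pathSem {π : PathExpr P A} {f g : E} (h : pathSem M π f g) :
    pcomp π (M.loc f) (M.loc g) := by
  induction π generalizing f with
  | nil => exact congrArg M.loc h
  | cons l π ih =>
    obtain ⟨f', hl, hπ⟩ := h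
    refine ⟨M.loc f', ?_, ih hπ⟩
    cases l with
    | next => exact M.next_loc hl
    | nextStar => exact M.loc_eq_of_nextStar hl
    | msg => exact ⟨hl.1, hl.2.1⟩
    | lab => exact congrArg M.loc hl.1

lemma IsGossip.pcomp_left_unique {π : PathExpr P A} (hπ : IsGossip π) {x x' y : P}
    (h : pcomp π x y) (h' : pcomp π x' y) : x = x' := by
  obtain ⟨r, _ | ⟨_, _⟩, -, rfl⟩ := hπ
  · obtain ⟨_, rfl, _, rfl, rfl⟩ := h
    obtain ⟨_, rfl, _, rfl, rfl⟩ := h'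
    rfl
  · obtain ⟨_, rfl, _, ⟨rfl, -⟩, -⟩ := h
    obtain ⟨_, rfl, _, ⟨rfl, -⟩, -⟩ := h'
    rfl

lemma IsGossip.lt_of_pathSem {π : PathExpr P A} (hπ : IsGossip π) {f e : E}
    (h : pathSem M π f e) : M.lt f e := by
  obtain ⟨_, _ | ⟨_, _⟩, -, rfl⟩ := hπ
  · obtain ⟨f₁, hn, hrest⟩ := h
    exact M.lt_of_step_of_le (Or.inl hn) (le_of_pathSem M hrest)
  · obtain ⟨f₁, hss, f₂, ⟨-, -, hm⟩, hrest⟩ := h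
    exact M.lt_of_le_of_lt (M.le_of_nextStar hss)
      (M.lt_of_step_of_le (Or.inr hm) (le_of_pathSem M hrest))

lemma IsGossip.loc_of_pathSem {π : PathExpr P A} (hπ : IsGossip π) {p q : P}
    (hc : pcomp π p q) {f e : E} (h : pathSem M π f e) (he : M.loc e = q) :
    M.loc f = p :=
  hπ.pcomp_left_unique (he ▸ pcomp_of_pathSem M h) hc

lemma exists_pathSem_of_pathSem_gossipSuffix_append (w₁ : List P) {r s : P} {w₂ : List P}
    {h e : E} (hπ : pathSem M (gossipSuffix r (w₁ ++ s :: w₂)) h e) :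
    ∃ u, M.loc u = s ∧ M.le h u ∧ pathSem M (gossipSuffix s w₂) u e := by
  induction w₁ generalizing r h with
  | nil =>
    obtain ⟨f, ⟨-, hfs, hm⟩, u, hss, hrest⟩ := hπ
    exact ⟨u, (M.loc_eq_of_nextStar hss).symm.trans hfs,
      M.le_of_msg_of_le hm (M.le_of_nextStar hss), hrest⟩
  | cons t w₁ ih =>
    obtain ⟨f, ⟨-, -, hm⟩, f', hss, hrest⟩ := hπ
    obtain ⟨u, hus, hle, hu⟩ := ih hrest
    exact ⟨u, hus, (M.le_of_msg_of_le hm (M.le_of_nextStar hss)).trans hle, hu⟩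

/-- A causal path `g ≤ e` can be rerouted through pairwise distinct processes: when a
message re-enters a process already visited, jump along that process to the later visit. -/
lemma exists_nodup_pathSem_of_le {g e : E} (h : M.le g e) :
    ∃ w : List P, (M.loc g :: w).Nodup ∧
      pathSem M (.nextStar :: gossipSuffix (M.loc g) w) g e := by
  induction h using Relation.ReflTransGen.head_induction_on with
  | refl => exact ⟨[], List.nodup_singleton _, e, .refl, rfl⟩
  | @head a c hstep _ ih =>
    obtain ⟨w, hnd, f, hcf, hπ⟩ := ih
    rcases hstep with hn | hm
    · rw [M.next_loc hn]
      exact ⟨w, hnd, f, .head hn hcf, hπ⟩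
    by_cases hmem : M.loc a ∈ M.loc c :: w
    · have hmem' : M.loc a ∈ w := (List.mem_cons.mp hmem).resolve_left (M.msg_loc hm)
      obtain ⟨w₁, w₂, rfl⟩ := List.append_of_mem hmem'
      obtain ⟨u, hua, hfu, hu⟩ := exists_pathSem_of_pathSem_gossipSuffix_append M w₁ hπ
      have hau : M.le a u := (M.le_of_msg_of_le hm (M.le_of_nextStar hcf)).trans hfu
      refine ⟨w₂, hnd.sublist ((List.sublist_append_right w₁ _).cons _), u,
        M.nextStar_of_le hua.symm hau, hu⟩
    · exact ⟨M.loc c :: w, List.nodup_cons.mpr ⟨hmem, hnd⟩,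
        a, .refl, c, ⟨rfl, rfl, hm⟩, f, hcf, hπ⟩

lemma exists_gossip_pathSem_of_lt {p q : P} {g e : E} (hg : M.loc g = p) (he : M.loc e = q)
    (hlt : M.lt g e) :
    ∃ π : PathExpr P A, IsGossip π ∧ pcomp π p q ∧ pathSem M π g e := by
  obtain ⟨w, hnd, hπ⟩ := exists_nodup_pathSem_of_le M hlt.1
  suffices ∃ π : PathExpr P A, IsGossip π ∧ pathSem M π g e by
    obtain ⟨π, hgossip, hpath⟩ := this
    exact ⟨π, hgossip, hg ▸ he ▸ pcomp_of_pathSem M hpath, hpath⟩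
  cases w with
  | nil =>
    obtain ⟨f, hgf, rfl⟩ := hπ
    rcases hgf.cases_head with rfl | ⟨c, hn, hce⟩
    · exact absurd rfl hlt.2
    · exact ⟨gossipExpr (M.loc g) [], ⟨_, [], hnd, rfl⟩, c, hn, f, hce, rfl⟩
  | cons t w => exact ⟨_, ⟨_, t :: w, hnd, rfl⟩, hπ⟩

lemma exists_gossip_pcomp (p q : P) : ∃ π : PathExpr P A, IsGossip π ∧ pcomp π p q := by
  by_cases hpq : p = q
  · subst hpq
    exact ⟨gossipExpr p [], ⟨p, [], List.nodup_singleton p, rfl⟩, p, rfl, p, rfl, rfl⟩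
  · exact ⟨gossipExpr p [q], ⟨p, [q], by simp [hpq], rfl⟩,
      p, rfl, q, ⟨rfl, rfl⟩, q, rfl, rfl⟩

end Gossip
open Gossip in
theorem stmt10_general {P A E : Type} (M : MSC P A E)
    (p q : P) (e : E) (he : M.loc e = q)
    (x : ExtEv E) (hx : IsLastProc M p e x) :
    (∀ π : PathExpr P A, IsGossip π → pcomp π p q →
        ∀ y, IsLast M π e y → M.extLe y x) ∧
    (∃ π : PathExpr P A, IsGossip π ∧ pcomp π p q ∧ IsLast M π e x) := by
  have below {π : PathExpr P A} (hπ : IsGossip π) (hc : pcomp π p q) {f : E}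
      (hf : pathSem M π f e) : M.loc f = p ∧ M.lt f e :=
    ⟨hπ.loc_of_pathSem M hc hf he, hπ.lt_of_pathSem M hf⟩
  constructor
  · intro π hπ hc y hy
    match y, x, hy, hx with
    | .bot, _, _, _ | .evt _, .top, _, _ => trivial
    | .evt f, .bot, ⟨hf, _⟩, hx => exact (below hπ hc hf).elim (hx f)
    | .evt f, .evt _, ⟨hf, _⟩, ⟨_, _, hmax⟩ => exact (below hπ hc hf).elim (hmax f)
  · match x, hx with
    | .bot, hx =>
      obtain ⟨π, hπ, hc⟩ := exists_gossip_pcomp (A := A) p q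
      exact ⟨π, hπ, hc, fun f hf => (below hπ hc hf).elim (hx f)⟩
    | .evt g, ⟨hg, hlt, hmax⟩ =>
      obtain ⟨π, hπ, hc, hgπ⟩ := exists_gossip_pathSem_of_lt M hg he hlt
      exact ⟨π, hπ, hc, hgπ, fun f hf => (below hπ hc hf).elim (hmax f)⟩

open Gossip in
/-- for `e ∈ E_q`, `last_p(e) = max { last_π(e) : π ∈ Π^gossip_{p,q} }`:
`last_p(e)` is an upper bound of the `last_π(e)` and is attained by some
`π ∈ Π^gossip_{p,q}`. -/
theorem stmt10 {P A E : Type} [Fintype P] [Fintype A] (M : MSC P A E)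
    (p q : P) (e : E) (he : M.loc e = q)
    (x : ExtEv E) (hx : IsLastProc M p e x) :
    (∀ π : PathExpr P A, IsGossip π → pcomp π p q →
        ∀ y, IsLast M π e y → M.extLe y x) ∧
    (∃ π : PathExpr P A, IsGossip π ∧ pcomp π p q ∧ IsLast M π e x) :=
  stmt10_general M p q e he x hx
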